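/- Let d ≥ 2, let L be a finite set of affine functions ℝ^{d−1} → ℝ (each representing a non-vertical hyperplane in ℝ^d given by its graph), and let g : ℝ^{d−1} → ℝ be an affine function whose graph is contained in the corridor corr(L). Then there exists a subset H ⊆ L with |H| ≤ d + 1 such that the graph of g is contained in corr(H). -/

import Mathlib

noncomputable section

/-- The corridor of a set `L` of affine functions `ℝ^{d-1} → ℝ` (each representing a
non-vertical hyperplane in `ℝ^d` via its graph): the union of the graphs of all convex
combinations of functions in `L` (taken in the vector space of affine functions). -/
def corrD {E : Type*} [AddCommGroup E] [Module ℝ E]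
    (L : Set (E →ᵃ[ℝ] ℝ)) : Set (E × ℝ) :=
  {p | ∃ h ∈ convexHull ℝ L, p.2 = h p.1}

/-- The graph of an affine function `g : ℝ^{d-1} → ℝ`, a non-vertical hyperplane in `ℝ^d`. -/
def affGraph {E : Type*} [AddCommGroup E] [Module ℝ E]
    (g : E →ᵃ[ℝ] ℝ) : Set (E × ℝ) :=
  {p | p.2 = g p.1}

/-!
The corridor of `L` contains the graph of `g` exactly when `g` lies in the convex hull of `L` in
the `d`-dimensional space of affine functions; the theorem is then Carathéodory's theorem in that
space. For the nontrivial direction, separate `g` from `convexHull L` by a linear functional `ψ`.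
Every such `ψ` is `h ↦ c * h 0 + h.linear v`: for `c ≠ 0` it is `c` times evaluation at
`c⁻¹ • v`, which cannot separate since `g` agrees there with a member of the hull; for `c = 0` it
measures slopes along `v`, and a slope of `g` exceeding those of all of `L` would put the graph
of `g` above the corridor far out along `v`.
-/

open Filter Module

section ConvexHull

variable {𝕜 V : Type*} [Field 𝕜] [LinearOrder 𝕜] [IsStrictOrderedRing 𝕜]
  [AddCommGroup V] [Module 𝕜 V]

theorem LinearMap.exists_ge_of_mem_convexHull (ψ : V →ₗ[𝕜] 𝕜) {s : Set V} {x : V}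
    (hx : x ∈ convexHull 𝕜 s) : ∃ y ∈ s, ψ x ≤ ψ y :=
  (ψ.convexOn convex_univ).exists_ge_of_mem_convexHull (Set.subset_univ s) hx

theorem Finset.exists_subset_card_le_of_mem_convexHull [FiniteDimensional 𝕜 V] {s : Finset V}
    {x : V} (hx : x ∈ convexHull 𝕜 (s : Set V)) :
    ∃ t ⊆ s, t.card ≤ finrank 𝕜 V + 1 ∧ x ∈ convexHull 𝕜 (t : Set V) := by
  rw [convexHull_eq_union] at hx
  simp only [Set.mem_iUnion] at hx
  obtain ⟨t, hts, hindep, hxt⟩ := hx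
  refine ⟨t, Finset.coe_subset.1 hts, ?_, hxt⟩
  calc t.card = Fintype.card t := (Fintype.card_coe t).symm
    _ ≤ finrank 𝕜 (vectorSpan 𝕜 (Set.range ((↑) : t → V))) + 1 := hindep.card_le_finrank_succ
    _ ≤ finrank 𝕜 V + 1 := by gcongr; exact Submodule.finrank_le _

end ConvexHull

theorem mem_convexHull_of_forall_dual_le {V : Type*} [AddCommGroup V] [Module ℝ V]
    [FiniteDimensional ℝ V] {s : Set V} (hs : s.Finite) {x : V}
    (h : ∀ ψ : Dual ℝ V, ∃ y ∈ s, ψ x ≤ ψ y) : x ∈ convexHull ℝ s := by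
  let e := (finBasis ℝ V).equivFun
  have hclosed : IsClosed (convexHull ℝ (e '' s)) :=
    ((hs.image e).isCompact_convexHull (𝕜 := ℝ)).isClosed
  suffices e x ∈ convexHull ℝ (e '' s) by
    rwa [← e.coe_coe, ← LinearMap.image_convexHull, e.coe_coe, e.injective.mem_set_image] at this
  rw [← iInter_halfSpaces_eq (convex_convexHull ℝ _) hclosed, Set.mem_iInter]
  intro l
  obtain ⟨y, hy, hxy⟩ := h (l.toLinearMap ∘ₗ e.toLinearMap)
  exact ⟨e y, subset_convexHull ℝ _ (Set.mem_image_of_mem e hy), hxy⟩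

variable {E : Type*} [AddCommGroup E] [Module ℝ E]

theorem AffineMap.exists_dual_apply_eq [FiniteDimensional ℝ E] (ψ : Dual ℝ (E →ᵃ[ℝ] ℝ)) :
    ∃ (c : ℝ) (v : E), ∀ h : E →ᵃ[ℝ] ℝ, ψ h = c * h 0 + h.linear v := by
  let φ := ψ ∘ₗ (AffineMap.toConstProdLinearMap ℝ).symm.toLinearMap
  refine ⟨φ (1, 0), (evalEquiv ℝ E).symm (φ ∘ₗ LinearMap.inr ℝ ℝ _), fun h => ?_⟩
  have hsplit : ψ h = φ (h 0 • (1, 0) + (0, h.linear)) := by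
    rw [show h 0 • ((1 : ℝ), (0 : E →ₗ[ℝ] ℝ)) + (0, h.linear) = AffineMap.toConstProdLinearMap ℝ h by
      ext <;> simp]
    simp only [φ, LinearMap.comp_apply, LinearEquiv.coe_coe, LinearEquiv.symm_apply_apply]
  rw [hsplit, map_add, map_smul, smul_eq_mul, mul_comm]
  congr 1
  have := (evalEquiv ℝ E).apply_symm_apply (φ ∘ₗ LinearMap.inr ℝ ℝ _)
  exact (LinearMap.congr_fun this h.linear).symm

section Corridor

variable {L : Set (E →ᵃ[ℝ] ℝ)} {g : E →ᵃ[ℝ] ℝ}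

theorem exists_apply_le_of_affGraph_subset_corrD (hg : affGraph g ⊆ corrD L) (x : E) :
    ∃ l ∈ L, g x ≤ l x := by
  obtain ⟨h, hh, hgh : g x = h x⟩ := hg (show (x, g x) ∈ affGraph g from rfl)
  let eval : (E →ᵃ[ℝ] ℝ) →ₗ[ℝ] ℝ :=
    { toFun := fun f => f x, map_add' := fun _ _ => rfl, map_smul' := fun _ _ => rfl }
  obtain ⟨l, hl, hle⟩ := eval.exists_ge_of_mem_convexHull hh
  exact ⟨l, hl, hgh.trans_le hle⟩

theorem exists_linear_le_of_affGraph_subset_corrD (hL : L.Finite) (hg : affGraph g ⊆ corrD L)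
    (v : E) : ∃ l ∈ L, g.linear v ≤ l.linear v := by
  by_contra! hlt
  have hfar : ∀ᶠ t : ℝ in atTop, ∀ l ∈ L, l (t • v) < g (t • v) := by
    refine (eventually_all_finite hL).2 fun l hl => ?_
    have hlim : Tendsto (fun t : ℝ => g 0 - l 0 + t * (g.linear v - l.linear v)) atTop atTop :=
      tendsto_atTop_add_const_left _ _ (tendsto_id.atTop_mul_const (sub_pos.2 (hlt l hl)))
    filter_upwards [hlim.eventually_gt_atTop 0] with t ht
    rw [g.decomp, l.decomp]
    simp only [Pi.add_apply, map_smul, smul_eq_mul] at ht ⊢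
    linarith
  obtain ⟨t, ht⟩ := hfar.exists
  obtain ⟨l, hl, hle⟩ := exists_apply_le_of_affGraph_subset_corrD hg (t • v)
  exact (ht l hl).not_ge hle

theorem exists_dual_le_of_affGraph_subset_corrD [FiniteDimensional ℝ E] (hL : L.Finite)
    (hg : affGraph g ⊆ corrD L) (ψ : Dual ℝ (E →ᵃ[ℝ] ℝ)) : ∃ l ∈ L, ψ g ≤ ψ l := by
  obtain ⟨c, v, hψ⟩ := AffineMap.exists_dual_apply_eq ψ
  rcases eq_or_ne c 0 with rfl | hc
  · simpa only [hψ, zero_mul, zero_add] using exists_linear_le_of_affGraph_subset_corrD hL hg v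
  have hψ_eval : ∀ h : E →ᵃ[ℝ] ℝ, ψ h = c * h (c⁻¹ • v) := by
    intro h
    rw [hψ, show h (c⁻¹ • v) = h.linear (c⁻¹ • v) + h 0 from congrFun h.decomp _, map_smul,
      smul_eq_mul]
    field_simp
    ring
  obtain ⟨h, hh, hgh : g (c⁻¹ • v) = h (c⁻¹ • v)⟩ :=
    hg (show (c⁻¹ • v, g (c⁻¹ • v)) ∈ affGraph g from rfl)
  obtain ⟨l, hl, hle⟩ := ψ.exists_ge_of_mem_convexHull hh
  refine ⟨l, hl, ?_⟩
  rwa [hψ_eval, hgh, ← hψ_eval]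

theorem affGraph_subset_corrD_iff [FiniteDimensional ℝ E] (hL : L.Finite) :
    affGraph g ⊆ corrD L ↔ g ∈ convexHull ℝ L :=
  ⟨fun hg => mem_convexHull_of_forall_dual_le hL (exists_dual_le_of_affGraph_subset_corrD hL hg),
    fun hg _ hp => ⟨g, hg, hp⟩⟩

end Corridor

/-- Dual Carathéodory: if the graph of `g` lies in the corridor of `L`, then it lies in the
corridor of at most `d + 1` of the hyperplanes of `L`. -/
theorem hyperplane_in_corridor_caratheodory :
    ∀ d : ℕ, 2 ≤ d →
      ∀ L : Finset ((Fin (d - 1) → ℝ) →ᵃ[ℝ] ℝ),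
        ∀ g : (Fin (d - 1) → ℝ) →ᵃ[ℝ] ℝ,
          affGraph g ⊆ corrD (↑L) →
          ∃ H : Finset ((Fin (d - 1) → ℝ) →ᵃ[ℝ] ℝ),
            H ⊆ L ∧ H.card ≤ d + 1 ∧ affGraph g ⊆ corrD (↑H) := by
  intro d hd L g hg
  obtain ⟨H, hHL, hcard, hgH⟩ :=
    L.exists_subset_card_le_of_mem_convexHull ((affGraph_subset_corrD_iff L.finite_toSet).1 hg)
  refine ⟨H, hHL, ?_, (affGraph_subset_corrD_iff H.finite_toSet).2 hgH⟩
  rw [AffineMap.finrank_eq, finrank_fin_fun, finrank_self] at hcard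
  omega
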